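/- Let φ be a proper partial (Δ+1)-edge-coloring, C a φ-shiftable chain, and ψ := Shift(φ,C). If a vertex x satisfies x ∉ R⁻(C,φ) ∩ R⁻(C,ψ), then R⁺(x,φ) = R⁺(x,ψ). -/

import Mathlib

open SimpleGraph

variable {V : Type*} [DecidableEq V]

/-- Two edges (as unordered pairs of vertices) are adjacent: distinct and sharing an endpoint. -/
def EdgeAdj (e f : Sym2 V) : Prop := e ≠ f ∧ ∃ v, v ∈ e ∧ v ∈ f

/-- A proper partial edge-coloring of `G` with colors `{1,…,Δ+1}` (as `Fin (Δ+1)`):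
its domain consists of edges of `G`, and adjacent colored edges get distinct colors. -/
def IsProperPartial (G : SimpleGraph V) (Δ : ℕ)
    (φ : Sym2 V → Option (Fin (Δ + 1))) : Prop :=
  (∀ e, (φ e).isSome → e ∈ G.edgeSet) ∧
  ∀ e f, EdgeAdj e f → (φ e).isSome → φ e ≠ φ f

/-- The set `M(φ,x)` of colors missing at `x`. -/
def missingColors (G : SimpleGraph V) (Δ : ℕ)
    (φ : Sym2 V → Option (Fin (Δ + 1))) (x : V) : Set (Fin (Δ + 1)) :=
  {c | ∀ y, G.Adj x y → φ s(x, y) ≠ some c}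

/-- `Shift φ e₀ e₁`: move the color of `e₁` to `e₀`, uncolor `e₁`, keep all else. -/
def Shift {α : Type*} (φ : Sym2 V → Option α) (e₀ e₁ : Sym2 V) :
    Sym2 V → Option α :=
  fun e => if e = e₀ then φ e₁ else if e = e₁ then none else φ e

/-- `(e₀, e₁)` is a `φ`-shiftable pair. -/
def ShiftablePair (G : SimpleGraph V) (Δ : ℕ) (φ : Sym2 V → Option (Fin (Δ + 1)))
    (e₀ e₁ : Sym2 V) : Prop :=
  EdgeAdj e₀ e₁ ∧ e₀ ∈ G.edgeSet ∧ φ e₀ = none ∧ (φ e₁).isSome ∧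
    IsProperPartial G Δ (Shift φ e₀ e₁)

/-- Shifting a coloring along a chain (list of edges). -/
def ShiftChain {α : Type*} : List (Sym2 V) → (Sym2 V → Option α) → (Sym2 V → Option α)
  | [], φ => φ
  | [_], φ => φ
  | e₀ :: e₁ :: rest, φ => ShiftChain (e₁ :: rest) (Shift φ e₀ e₁)

/-- A chain is `φ`-shiftable: each consecutive pair is shiftable w.r.t. the current coloring
(for a single-edge chain we require the edge to be an uncolored edge of `G`). -/
def ChainShiftable (G : SimpleGraph V) (Δ : ℕ) :
    List (Sym2 V) → (Sym2 V → Option (Fin (Δ + 1))) → Prop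
  | [], _ => True
  | [e], φ => φ e = none ∧ e ∈ G.edgeSet
  | e₀ :: e₁ :: rest, φ =>
      ShiftablePair G Δ φ e₀ e₁ ∧ ChainShiftable G Δ (e₁ :: rest) (Shift φ e₀ e₁)

/-- The spanning subgraph `G(φ, αβ)` of edges colored `α` or `β`. -/
def abSub (G : SimpleGraph V) (Δ : ℕ) (φ : Sym2 V → Option (Fin (Δ + 1)))
    (α β : Fin (Δ + 1)) : SimpleGraph V where
  Adj x y := G.Adj x y ∧ (φ s(x, y) = some α ∨ φ s(x, y) = some β)
  symm := by
    constructor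
    intro x y h
    refine ⟨h.1.symm, ?_⟩
    rw [Sym2.eq_swap]
    exact h.2
  loopless := ⟨fun x h => G.irrefl h.1⟩

/-- A chain is `φ`-happy: it is `φ`-shiftable and its last edge is happy after shifting. -/
def ChainHappy (G : SimpleGraph V) (Δ : ℕ) (C : List (Sym2 V))
    (φ : Sym2 V → Option (Fin (Δ + 1))) : Prop :=
  ChainShiftable G Δ C φ ∧
    ∃ x y : V, C.getLast? = some s(x, y) ∧
      (missingColors G Δ (ShiftChain C φ) x ∩ missingColors G Δ (ShiftChain C φ) y).Nonempty

/-- `R⁺(x,φ,αβ)`: vertices `y` with `y = x`, or `y` adjacent to `x`, or `y` in the same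
`αβ`-component as some neighbor `z` of `x` with `deg(z,φ,αβ) < 2`. -/
def Rout (G : SimpleGraph V) (Δ : ℕ) (φ : Sym2 V → Option (Fin (Δ + 1)))
    (α β : Fin (Δ + 1)) (x : V) : Set V :=
  {y | y = x ∨ G.Adj x y ∨ ∃ z, G.Adj x z ∧
    ((abSub G Δ φ α β).neighborSet z).ncard < 2 ∧ (abSub G Δ φ α β).Reachable z y}

/-- `R⁻(y,φ)`: the union over all pairs of distinct colors `α ≠ β` of
`{x : y ∈ R⁺(x,φ,αβ)}`. -/
def Rin (G : SimpleGraph V) (Δ : ℕ) (φ : Sym2 V → Option (Fin (Δ + 1))) (y : V) :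
    Set V :=
  {x | ∃ α β : Fin (Δ + 1), α ≠ β ∧ y ∈ Rout G Δ φ α β x}

/-- `R⁺(x,φ)`: the union of `R⁺(x,φ,αβ)` over all pairs of distinct colors. -/
def RoutAll (G : SimpleGraph V) (Δ : ℕ) (φ : Sym2 V → Option (Fin (Δ + 1))) (x : V) :
    Set V :=
  {y | ∃ α β : Fin (Δ + 1), α ≠ β ∧ y ∈ Rout G Δ φ α β x}

/-- `R⁻(C,φ) = ⋃_{y ∈ V(C)} R⁻(y,φ)` for a chain `C`. -/
def RinChain (G : SimpleGraph V) (Δ : ℕ) (φ : Sym2 V → Option (Fin (Δ + 1)))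
    (C : List (Sym2 V)) : Set V :=
  {x | ∃ e ∈ C, ∃ v, v ∈ e ∧ x ∈ Rin G Δ φ v}

/-!
Shifting along `C` recolors only edges of `C`, so `φ` and `ψ := Shift(φ,C)` agree off `C`.
The set `R⁺(x,φ)` is determined by the colors of the edges at its own vertices: the
low-degree neighbors `z` of `x` and their `αβ`-components can be read off from those edges
alone. If `x ∉ R⁻(C,φ)`, no vertex of `R⁺(x,φ)` lies on an edge of `C`, so all these edges
keep their colors and `R⁺(x,φ) = R⁺(x,ψ)`; the case `x ∉ R⁻(C,ψ)` is symmetric.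
-/

lemma shift_apply_of_ne {α : Type*} {φ : Sym2 V → Option α} {e₀ e₁ e : Sym2 V}
    (h₀ : e ≠ e₀) (h₁ : e ≠ e₁) : Shift φ e₀ e₁ e = φ e := by
  simp [Shift, h₀, h₁]

lemma shiftChain_apply_of_not_mem {α : Type*} :
    ∀ {C : List (Sym2 V)} {φ : Sym2 V → Option α} {e : Sym2 V}, e ∉ C →
      ShiftChain C φ e = φ e
  | [], _, _, _ => rfl
  | [_], _, _, _ => rfl
  | e₀ :: e₁ :: rest, _, _, he => by
      have he₀ : _ ∉ e₁ :: rest := fun h => he (List.mem_cons_of_mem e₀ h)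
      rw [ShiftChain, shiftChain_apply_of_not_mem he₀]
      exact shift_apply_of_ne (List.ne_of_not_mem_cons he) (List.ne_of_not_mem_cons he₀)

namespace SimpleGraph

lemma reachable_iff_of_adj_iff {V : Type*} {H H' : SimpleGraph V} {z : V}
    (h : ∀ a b, H.Reachable z a → (H.Adj a b ↔ H'.Adj a b)) (y : V) :
    H.Reachable z y ↔ H'.Reachable z y := by
  simp only [reachable_iff_reflTransGen]
  constructor
  · intro hy
    induction hy with
    | refl => rfl
    | tail hzb hbc ih =>
      exact ih.tail ((h _ _ ((reachable_iff_reflTransGen _ _).mpr hzb)).mp hbc)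
  · intro hy
    induction hy with
    | refl => rfl
    | tail _ hbc ih =>
      exact ih.tail ((h _ _ ((reachable_iff_reflTransGen _ _).mpr ih)).mpr hbc)

end SimpleGraph

section Rout

variable {V : Type*} {G : SimpleGraph V} {Δ : ℕ} {φ ψ : Sym2 V → Option (Fin (Δ + 1))}

lemma abSub_adj_iff_of_forall_eq {α β : Fin (Δ + 1)} {a : V}
    (h : ∀ w, φ s(a, w) = ψ s(a, w)) (b : V) :
    (abSub G Δ φ α β).Adj a b ↔ (abSub G Δ ψ α β).Adj a b := by
  change _ ∧ _ ↔ _ ∧ _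
  rw [h b]

lemma rout_eq_of_forall_eq {α β : Fin (Δ + 1)} {x : V}
    (h : ∀ v ∈ Rout G Δ φ α β x, ∀ w, φ s(v, w) = ψ s(v, w)) :
    Rout G Δ φ α β x = Rout G Δ ψ α β x := by
  have hnbr : ∀ z, G.Adj x z →
      (abSub G Δ φ α β).neighborSet z = (abSub G Δ ψ α β).neighborSet z := fun z hz =>
    Set.ext (abSub_adj_iff_of_forall_eq (h z (Or.inr (Or.inl hz))))
  have hreach : ∀ z, G.Adj x z → ((abSub G Δ φ α β).neighborSet z).ncard < 2 → ∀ y,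
      ((abSub G Δ φ α β).Reachable z y ↔ (abSub G Δ ψ α β).Reachable z y) :=
    fun z hz hdeg => reachable_iff_of_adj_iff fun a _ ha =>
      abSub_adj_iff_of_forall_eq (h a (Or.inr (Or.inr ⟨z, hz, hdeg, ha⟩))) _
  ext y
  refine or_congr Iff.rfl (or_congr Iff.rfl ⟨?_, ?_⟩)
  · rintro ⟨z, hz, hdeg, hzy⟩
    exact ⟨z, hz, hnbr z hz ▸ hdeg, (hreach z hz hdeg y).mp hzy⟩
  · rintro ⟨z, hz, hdeg, hzy⟩
    have hdeg' := (hnbr z hz).symm ▸ hdeg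
    exact ⟨z, hz, hdeg', (hreach z hz hdeg' y).mpr hzy⟩

lemma routAll_eq_of_forall_eq {x : V}
    (h : ∀ v ∈ RoutAll G Δ φ x, ∀ w, φ s(v, w) = ψ s(v, w)) :
    RoutAll G Δ φ x = RoutAll G Δ ψ x := by
  ext y
  refine exists₂_congr fun α β => and_congr_right fun hαβ => ?_
  rw [rout_eq_of_forall_eq fun v hv => h v ⟨α, β, hαβ, hv⟩]

lemma routAll_eq_of_eq_off_chain {C : List (Sym2 V)} {x : V}
    (hagree : ∀ e ∉ C, φ e = ψ e) (hx : x ∉ RinChain G Δ φ C) :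
    RoutAll G Δ φ x = RoutAll G Δ ψ x :=
  routAll_eq_of_forall_eq fun v hv w =>
    hagree _ fun he => hx ⟨_, he, v, Sym2.mem_mk_left v w, hv⟩

end Rout

theorem Rout_unchanged_general (G : SimpleGraph V) (Δ : ℕ)
    (φ : Sym2 V → Option (Fin (Δ + 1)))
    (C : List (Sym2 V))
    (x : V)
    (hx : x ∉ RinChain G Δ φ C ∩ RinChain G Δ (ShiftChain C φ) C) :
    RoutAll G Δ φ x = RoutAll G Δ (ShiftChain C φ) x := by
  have hagree : ∀ e ∉ C, φ e = ShiftChain C φ e :=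
    fun _ he => (shiftChain_apply_of_not_mem he).symm
  rcases not_and_or.mp hx with hφ | hψ
  · exact routAll_eq_of_eq_off_chain hagree hφ
  · exact (routAll_eq_of_eq_off_chain (fun e he => (hagree e he).symm) hψ).symm

/-- if `C` is a `φ`-shiftable chain, `ψ := Shift(φ,C)`, and
`x ∉ R⁻(C,φ) ∩ R⁻(C,ψ)`, then `R⁺(x,φ) = R⁺(x,ψ)`. -/
theorem Rout_unchanged [Fintype V] (G : SimpleGraph V) (Δ : ℕ)
    (φ : Sym2 V → Option (Fin (Δ + 1))) (hφ : IsProperPartial G Δ φ)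
    (C : List (Sym2 V)) (hchain : C.Chain' EdgeAdj) (hC : ChainShiftable G Δ C φ)
    (x : V)
    (hx : x ∉ RinChain G Δ φ C ∩ RinChain G Δ (ShiftChain C φ) C) :
    RoutAll G Δ φ x = RoutAll G Δ (ShiftChain C φ) x :=
  Rout_unchanged_general G Δ φ C x hx
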